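/- arXiv:2407.06919 — 11 statements merged into one kernel-verified Lean document; each statement's English description precedes it below -/
import Mathlib

section
/- Let d ≥ 1, let n ∈ ℝ^d with ‖n‖ = 1, let v ∈ ℝ^d, let ρ ∈ ℝ with ρ ≠ 0, and let c ∈ ℝ. Then the characteristic polynomial of the phasic coefficient matrix B(v,ρ,c,n) satisfies, for every λ ∈ ℝ, det(B(v,ρ,c,n) − λ·I_{d+1}) = (v·n − λ)^{d−1} · ((v·n − λ)² − c²). In particular the eigenvalues of B(v,ρ,c,n) are v·n (with algebraic multiplicity d−1) and v·n ± c. -/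
open scoped RealInnerProductSpace

/-- The phasic coefficient matrix `B(v,ρ,c,n)` of one component of the barotropic
Baer–Nunziato model in primitive variables, projected onto the direction `n`:
top-left `d×d` block `(v·n)·I_d`, top-right block `ρ⁻¹·n`, bottom-left block `ρc²·nᵀ`,
bottom-right entry `v·n`. -/
noncomputable def phasicB (d : ℕ) (v n : EuclideanSpace ℝ (Fin d)) (ρ c : ℝ) :
    Matrix (Fin d ⊕ Unit) (Fin d ⊕ Unit) ℝ :=
  Matrix.fromBlocks
    (⟪v, n⟫ • (1 : Matrix (Fin d) (Fin d) ℝ))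
    (Matrix.of fun i _ => ρ⁻¹ * n i)
    (Matrix.of fun _ j => ρ * c ^ 2 * n j)
    (⟪v, n⟫ • (1 : Matrix Unit Unit ℝ))

/-! Subtracting `λ` only shifts the two scalar diagonal blocks to `μ = v·n - λ`. For `μ ≠ 0` the
Schur complement of the block `μ • 1` is the `1 × 1` matrix `μ - μ⁻¹ (ρc² n)·(ρ⁻¹ n) = μ - μ⁻¹ c²`,
so the determinant is `μ ^ d (μ - μ⁻¹ c²) = μ ^ (d - 1) (μ² - c²)`. Both sides are continuous in
`μ`, so the identity extends to `μ = 0`. -/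

namespace Matrix

variable {m : Type*} [Fintype m] [DecidableEq m]

theorem det_fromBlocks_smul_one_replicateCol_replicateRow_of_ne_zero {K : Type*} [Field K]
    {μ : K} (hμ : μ ≠ 0) (ν : K) (u w : m → K) :
    (fromBlocks (μ • 1) (replicateCol Unit u) (replicateRow Unit w) (ν • 1)).det
      = μ ^ Fintype.card m * (ν - μ⁻¹ * (w ⬝ᵥ u)) := by
  let : Invertible (μ • (1 : Matrix m m K)) := ⟨μ⁻¹ • 1, by simp [hμ], by simp [hμ]⟩
  rw [det_fromBlocks₁₁, det_smul, det_one, mul_one, det_unique,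
    show ⅟(μ • 1 : Matrix m m K) = μ⁻¹ • 1 from rfl]
  simp [replicateRow_mul_replicateCol]

theorem det_fromBlocks_smul_one_replicateCol_replicateRow {𝕜 : Type*}
    [NontriviallyNormedField 𝕜] (hm : Fintype.card m ≠ 0) (μ : 𝕜) (u w : m → 𝕜) :
    (fromBlocks (μ • 1) (replicateCol Unit u) (replicateRow Unit w) (μ • 1)).det
      = μ ^ (Fintype.card m - 1) * (μ ^ 2 - w ⬝ᵥ u) := by
  have hdet : Continuous fun x : 𝕜 =>
      (fromBlocks (x • 1) (replicateCol Unit u) (replicateRow Unit w) (x • 1)).det := by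
    fun_prop
  have hrhs : Continuous fun x : 𝕜 => x ^ (Fintype.card m - 1) * (x ^ 2 - w ⬝ᵥ u) := by
    fun_prop
  refine congrFun (Continuous.ext_on (dense_compl_singleton 0) hdet hrhs ?_) μ
  intro x (hx : x ≠ 0)
  dsimp only
  obtain ⟨k, hk⟩ := Nat.exists_eq_add_one_of_ne_zero hm
  rw [det_fromBlocks_smul_one_replicateCol_replicateRow_of_ne_zero hx, hk, Nat.add_sub_cancel]
  field_simp
  ring

end Matrix

theorem phasicB_sub_smul_one (d : ℕ) (v n : EuclideanSpace ℝ (Fin d)) (ρ c lam : ℝ) :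
    phasicB d v n ρ c - lam • (1 : Matrix (Fin d ⊕ Unit) (Fin d ⊕ Unit) ℝ)
      = Matrix.fromBlocks ((⟪v, n⟫ - lam) • 1) (Matrix.replicateCol Unit (ρ⁻¹ • n.ofLp))
          (Matrix.replicateRow Unit ((ρ * c ^ 2) • n.ofLp)) ((⟪v, n⟫ - lam) • 1) := by
  rw [phasicB, ← Matrix.fromBlocks_one, Matrix.fromBlocks_smul, sub_eq_add_neg,
    Matrix.fromBlocks_neg, Matrix.fromBlocks_add]
  simp only [smul_zero, neg_zero, add_zero, sub_smul, ← sub_eq_add_neg]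
  rfl

theorem smul_dotProduct_smul_of_norm_eq_one {d : ℕ} {n : EuclideanSpace ℝ (Fin d)} (hn : ‖n‖ = 1)
    {ρ : ℝ} (hρ : ρ ≠ 0) (c : ℝ) : (ρ * c ^ 2) • n.ofLp ⬝ᵥ ρ⁻¹ • n.ofLp = c ^ 2 := by
  have hnn : n.ofLp ⬝ᵥ n.ofLp = 1 := by
    simpa [hn] using
      (EuclideanSpace.inner_eq_star_dotProduct n n).symm.trans (real_inner_self_eq_norm_sq n)
  rw [smul_dotProduct, dotProduct_smul, hnn, smul_eq_mul, smul_eq_mul]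
  field_simp

/-- Characteristic polynomial of the phasic coefficient matrix:
`det(B − λI) = (v·n − λ)^(d−1) ((v·n − λ)² − c²)`. -/
theorem phasicB_charpoly (d : ℕ) (hd : 1 ≤ d) (n : EuclideanSpace ℝ (Fin d))
    (hn : ‖n‖ = 1) (v : EuclideanSpace ℝ (Fin d)) (ρ : ℝ) (hρ : ρ ≠ 0) (c : ℝ) (lam : ℝ) :
    (phasicB d v n ρ c - lam • (1 : Matrix (Fin d ⊕ Unit) (Fin d ⊕ Unit) ℝ)).det
      = (⟪v, n⟫ - lam) ^ (d - 1) * ((⟪v, n⟫ - lam) ^ 2 - c ^ 2) := by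
  rw [phasicB_sub_smul_one, Matrix.det_fromBlocks_smul_one_replicateCol_replicateRow
    (by simpa using Nat.one_le_iff_ne_zero.mp hd), Fintype.card_fin,
    smul_dotProduct_smul_of_norm_eq_one hn hρ]
end

section
/- Let d ≥ 1, let n ∈ ℝ^d with ‖n‖ = 1, let v ∈ ℝ^d, ρ ≠ 0, c ∈ ℝ, V ∈ ℝ, and set δ := v·n − V and σ := δ² − c². Assume δ ≠ 0 and σ ≠ 0. Then the matrix B(v,ρ,c,n) − V·I_{d+1} is invertible, and its inverse is the (d+1)×(d+1) matrix whose top-left d×d block is δ⁻¹·I_d + c²·(δσ)⁻¹·(n⊗n), whose top-right d×1 block is −(ρσ)⁻¹·n, whose bottom-left 1×d block is −ρc²σ⁻¹·nᵀ, and whose bottom-right entry is δ·σ⁻¹. -/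
/-! With `δ = v·n − V`, the matrix `B − V·I` is the arrowhead matrix `[[δ I, u], [wᵀ, δ]]` with
`u = ρ⁻¹ n` and `w = ρc² n`, and `w ⬝ u = c²` since `‖n‖ = 1`. Its Schur complement
`δ − (w ⬝ u)/δ = σ/δ` is invertible, and block elimination yields the stated inverse, which is
verified blockwise; for square matrices a right inverse is also a left inverse. -/

open scoped RealInnerProductSpace

open Matrix

section Arrowhead

variable {K ι : Type*} [Field K] [Fintype ι] [DecidableEq ι]

def arrowhead (δ : K) (u w : ι → K) : Matrix (ι ⊕ Unit) (ι ⊕ Unit) K :=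
  fromBlocks (δ • 1) (replicateCol Unit u) (replicateRow Unit w) (δ • 1)

omit [DecidableEq ι] in
theorem replicateRow_mul_replicateCol_unit (v w : ι → K) :
    replicateRow Unit v * replicateCol Unit w = (v ⬝ᵥ w) • 1 := by
  ext
  simp

theorem arrowhead_mul_eq_one (u w : ι → K) {δ σ : K} (hδ : δ ≠ 0) (hσ : σ ≠ 0)
    (hσdef : σ = δ ^ 2 - w ⬝ᵥ u) :
    arrowhead δ u w *
      fromBlocks (δ⁻¹ • 1 + (δ * σ)⁻¹ • vecMulVec u w) (replicateCol Unit (-σ⁻¹ • u))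
        (replicateRow Unit (-σ⁻¹ • w)) ((δ * σ⁻¹) • 1) = 1 := by
  subst hσdef
  rw [arrowhead, fromBlocks_multiply, ← fromBlocks_one, vecMulVec_eq Unit, replicateCol_smul,
    replicateRow_smul]
  simp only [Matrix.smul_mul, Matrix.mul_smul, Matrix.one_mul, Matrix.mul_one, Matrix.mul_add,
    smul_smul, ← Matrix.mul_assoc, replicateRow_mul_replicateCol_unit]
  congr 1 <;> match_scalars <;> field_simp <;> ring

end Arrowhead

theorem EuclideanSpace.dotProduct_self_eq_norm_sq {ι : Type*} [Fintype ι]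
    (x : EuclideanSpace ℝ ι) : ⇑x ⬝ᵥ ⇑x = ‖x‖ ^ 2 := by
  rw [← real_inner_self_eq_norm_sq, EuclideanSpace.inner_eq_star_dotProduct, star_trivial]

theorem phasicB_sub_smul_one_eq_arrowhead (d : ℕ) (v n : EuclideanSpace ℝ (Fin d)) (ρ c V : ℝ) :
    phasicB d v n ρ c - V • 1 = arrowhead (⟪v, n⟫ - V) (ρ⁻¹ • ⇑n) ((ρ * c ^ 2) • ⇑n) := by
  rw [phasicB, arrowhead, ← fromBlocks_one, fromBlocks_smul, sub_eq_add_neg, fromBlocks_neg,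
    fromBlocks_add]
  simp only [smul_zero, neg_zero, add_zero, ← sub_eq_add_neg, ← sub_smul]
  rfl

theorem phasicB_sub_smul_inv_general (d : ℕ) (n : EuclideanSpace ℝ (Fin d))
    (hn : ‖n‖ = 1) (v : EuclideanSpace ℝ (Fin d)) (ρ : ℝ) (hρ : ρ ≠ 0) (c : ℝ)
    (V δ σ : ℝ) (hδdef : δ = ⟪v, n⟫ - V) (hσdef : σ = δ ^ 2 - c ^ 2)
    (hδ : δ ≠ 0) (hσ : σ ≠ 0) :
    (phasicB d v n ρ c - V • (1 : Matrix (Fin d ⊕ Unit) (Fin d ⊕ Unit) ℝ)) *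
        Matrix.fromBlocks
          (δ⁻¹ • (1 : Matrix (Fin d) (Fin d) ℝ)
            + (c ^ 2 * (δ * σ)⁻¹) • Matrix.vecMulVec (fun i => n i) (fun j => n j))
          (Matrix.of fun i _ => -(ρ * σ)⁻¹ * n i)
          (Matrix.of fun _ j => -(ρ * c ^ 2) * σ⁻¹ * n j)
          ((δ * σ⁻¹) • (1 : Matrix Unit Unit ℝ))
      = 1 ∧
    Matrix.fromBlocks
          (δ⁻¹ • (1 : Matrix (Fin d) (Fin d) ℝ)
            + (c ^ 2 * (δ * σ)⁻¹) • Matrix.vecMulVec (fun i => n i) (fun j => n j))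
          (Matrix.of fun i _ => -(ρ * σ)⁻¹ * n i)
          (Matrix.of fun _ j => -(ρ * c ^ 2) * σ⁻¹ * n j)
          ((δ * σ⁻¹) • (1 : Matrix Unit Unit ℝ)) *
        (phasicB d v n ρ c - V • (1 : Matrix (Fin d ⊕ Unit) (Fin d ⊕ Unit) ℝ))
      = 1 := by
  rw [phasicB_sub_smul_one_eq_arrowhead, ← hδdef]
  refine (and_iff_left_of_imp fun h => mul_eq_one_comm.mp h).mpr ?_
  have hwu : ((ρ * c ^ 2) • ⇑n) ⬝ᵥ (ρ⁻¹ • ⇑n) = c ^ 2 := by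
    rw [smul_dotProduct, dotProduct_smul, EuclideanSpace.dotProduct_self_eq_norm_sq, hn]
    simp only [smul_eq_mul]
    field_simp
  refine .trans (congrArg (arrowhead _ _ _ * ·) (fromBlocks_inj.mpr ⟨?_, ?_, ?_, rfl⟩))
    (arrowhead_mul_eq_one (ρ⁻¹ • ⇑n) ((ρ * c ^ 2) • ⇑n) hδ hσ (by rw [hσdef, hwu]))
  all_goals
    ext
    simp only [Matrix.add_apply, Matrix.smul_apply, vecMulVec_apply, of_apply, replicateCol_apply,
      replicateRow_apply, Pi.smul_apply, smul_eq_mul]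
    field_simp

/-- Explicit inverse of `B(v,ρ,c,n) − V·I`: with drift `δ := v·n − V` and `σ := δ² − c²`
both nonzero, the matrix `B − V·I` is invertible, with inverse having top-left block
`δ⁻¹I + c²(δσ)⁻¹ n⊗n`, top-right block `−(ρσ)⁻¹ n`, bottom-left block `−ρc²σ⁻¹ nᵀ` and
bottom-right entry `δσ⁻¹`. -/
theorem phasicB_sub_smul_inv (d : ℕ) (hd : 1 ≤ d) (n : EuclideanSpace ℝ (Fin d))
    (hn : ‖n‖ = 1) (v : EuclideanSpace ℝ (Fin d)) (ρ : ℝ) (hρ : ρ ≠ 0) (c : ℝ)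
    (V δ σ : ℝ) (hδdef : δ = ⟪v, n⟫ - V) (hσdef : σ = δ ^ 2 - c ^ 2)
    (hδ : δ ≠ 0) (hσ : σ ≠ 0) :
    (phasicB d v n ρ c - V • (1 : Matrix (Fin d ⊕ Unit) (Fin d ⊕ Unit) ℝ)) *
        Matrix.fromBlocks
          (δ⁻¹ • (1 : Matrix (Fin d) (Fin d) ℝ)
            + (c ^ 2 * (δ * σ)⁻¹) • Matrix.vecMulVec (fun i => n i) (fun j => n j))
          (Matrix.of fun i _ => -(ρ * σ)⁻¹ * n i)
          (Matrix.of fun _ j => -(ρ * c ^ 2) * σ⁻¹ * n j)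
          ((δ * σ⁻¹) • (1 : Matrix Unit Unit ℝ))
      = 1 ∧
    Matrix.fromBlocks
          (δ⁻¹ • (1 : Matrix (Fin d) (Fin d) ℝ)
            + (c ^ 2 * (δ * σ)⁻¹) • Matrix.vecMulVec (fun i => n i) (fun j => n j))
          (Matrix.of fun i _ => -(ρ * σ)⁻¹ * n i)
          (Matrix.of fun _ j => -(ρ * c ^ 2) * σ⁻¹ * n j)
          ((δ * σ⁻¹) • (1 : Matrix Unit Unit ℝ)) *
        (phasicB d v n ρ c - V • (1 : Matrix (Fin d ⊕ Unit) (Fin d ⊕ Unit) ℝ))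
      = 1 :=
  phasicB_sub_smul_inv_general d n hn v ρ hρ c V δ σ hδdef hσdef hδ hσ
end

section
/- Let d ≥ 1, let n ∈ ℝ^d with ‖n‖ = 1, let v ∈ ℝ^d, ρ ≠ 0, c ≠ 0, and let B = B(v,ρ,c,n) be the phasic coefficient matrix. Define the (d+1)×(d+1) matrix P whose top-left d×d block is (ρ²/(2c²))·(n⊗n) + (I_d − n⊗n), whose off-diagonal blocks are zero, and whose bottom-right entry is 1/(2c⁴). Then P is symmetric and positive definite, and the product P·B is a symmetric matrix. That is, P is a symmetrizer of the phasic subsystem. -/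
open scoped RealInnerProductSpace

/-- The symmetrizer of the phasic subsystem: the block-diagonal matrix `P` with
top-left block `(ρ²/(2c²)) n⊗n + (I_d − n⊗n)` and bottom-right entry `1/(2c⁴)`. -/
noncomputable def phasicP (d : ℕ) (n : EuclideanSpace ℝ (Fin d)) (ρ c : ℝ) :
    Matrix (Fin d ⊕ Unit) (Fin d ⊕ Unit) ℝ :=
  Matrix.fromBlocks
    ((ρ ^ 2 / (2 * c ^ 2)) • Matrix.vecMulVec (fun i => n i) (fun j => n j)
      + ((1 : Matrix (Fin d) (Fin d) ℝ) - Matrix.vecMulVec (fun i => n i) (fun j => n j)))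
    0 0
    ((1 / (2 * c ^ 4)) • (1 : Matrix Unit Unit ℝ))

/-! Write `P = diag(S, 1/(2c⁴))`, where `S` stretches by `a = ρ²/(2c²)` along the unit vector `n`
and fixes `n⊥`. Then `S` is positive definite, since `xᵀSx = a (n·x)² + ‖x - (n·x) n‖²`.
In `P·B` the diagonal blocks `(v·n) S` and `(v·n)/(2c⁴)` are symmetric, and because `S n = a n`
both off-diagonal blocks are `(ρ/(2c²)) n`, as a column and as a row. -/

open Matrix

namespace Matrix

variable {m n R : Type*}

theorem PosDef.fromBlocks_zero [Fintype m] [Fintype n] [Ring R] [PartialOrder R] [StarRing R]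
    [IsOrderedAddMonoid R] {A : Matrix m m R} {D : Matrix n n R} (hA : A.PosDef) (hD : D.PosDef) :
    (fromBlocks A 0 0 D).PosDef := by
  refine posDef_iff_dotProduct_mulVec.mpr ⟨hA.isHermitian.fromBlocks (by simp) hD.isHermitian, ?_⟩
  intro x hx
  obtain ⟨x₁, x₂, rfl⟩ : ∃ x₁ x₂, x = Sum.elim x₁ x₂ := ⟨_, _, (Sum.elim_comp_inl_inr x).symm⟩
  simp only [fromBlocks_mulVec, Function.star_sumElim, sumElim_dotProduct_sumElim,
    Sum.elim_comp_inl, Sum.elim_comp_inr, zero_mulVec, add_zero, zero_add]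
  obtain rfl | h₁ := eq_or_ne x₁ 0
  · have h₂ : x₂ ≠ 0 := by rintro rfl; exact hx Sum.elim_zero_zero
    simpa using hD.dotProduct_mulVec_pos h₂
  · exact add_pos_of_pos_of_nonneg (hA.dotProduct_mulVec_pos h₁)
      (hD.posSemidef.dotProduct_mulVec_nonneg x₂)

variable [DecidableEq n]

/-- For a unit vector `u`, the map that stretches by `a` along `u` and fixes `u⊥`. -/
def stretchAlong [Ring R] (a : R) (u : n → R) : Matrix n n R :=
  a • vecMulVec u u + (1 - vecMulVec u u)

theorem isSymm_stretchAlong [CommRing R] (a : R) (u : n → R) : (stretchAlong a u).IsSymm := by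
  simp only [stretchAlong, IsSymm, transpose_add, transpose_smul, transpose_sub, transpose_one,
    transpose_vecMulVec]

variable [Fintype n]

theorem stretchAlong_mulVec [CommRing R] (a : R) (u x : n → R) :
    stretchAlong a u *ᵥ x = x + ((a - 1) * (u ⬝ᵥ x)) • u := by
  simp only [stretchAlong, add_mulVec, smul_mulVec, sub_mulVec, one_mulVec, vecMulVec_mulVec,
    op_smul_eq_smul, smul_smul]
  module

theorem stretchAlong_mulVec_self [CommRing R] {u : n → R} (hu : u ⬝ᵥ u = 1) (a : R) :
    stretchAlong a u *ᵥ u = a • u := by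
  rw [stretchAlong_mulVec, hu]
  module

theorem posDef_stretchAlong {u : n → ℝ} (hu : u ⬝ᵥ u = 1) {a : ℝ} (ha : 0 < a) :
    (stretchAlong a u).PosDef := by
  refine posDef_iff_dotProduct_mulVec.mpr
    ⟨isHermitian_iff_isSymm.mpr (isSymm_stretchAlong a u), fun x hx => ?_⟩
  set s := u ⬝ᵥ x
  have hform : star x ⬝ᵥ (stretchAlong a u *ᵥ x) = a * s ^ 2 + (x - s • u) ⬝ᵥ (x - s • u) := by
    simp only [star_trivial, stretchAlong_mulVec, dotProduct_add, dotProduct_smul, sub_dotProduct,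
      dotProduct_sub, smul_dotProduct, hu, dotProduct_comm x u, smul_eq_mul]
    ring
  rw [hform]
  obtain hs | hs := eq_or_ne s 0
  · simpa [hs] using dotProduct_self_star_pos_iff.mpr hx
  · exact add_pos_of_pos_of_nonneg (by positivity) (dotProduct_self_star_nonneg _)

end Matrix

section Phasic

variable {d : ℕ} {n : EuclideanSpace ℝ (Fin d)}

theorem phasicP_eq (ρ c : ℝ) :
    phasicP d n ρ c =
      fromBlocks (stretchAlong (ρ ^ 2 / (2 * c ^ 2)) n.ofLp) 0 0 ((1 / (2 * c ^ 4)) • 1) :=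
  rfl

theorem phasicB_eq (v : EuclideanSpace ℝ (Fin d)) (ρ c : ℝ) :
    phasicB d v n ρ c =
      fromBlocks (⟪v, n⟫ • 1) (replicateCol Unit (ρ⁻¹ • n.ofLp))
        (replicateRow Unit ((ρ * c ^ 2) • n.ofLp)) (⟪v, n⟫ • 1) :=
  rfl

theorem phasicP_posDef (hn : n.ofLp ⬝ᵥ n.ofLp = 1) {ρ c : ℝ} (hρ : ρ ≠ 0) (hc : c ≠ 0) :
    (phasicP d n ρ c).PosDef := by
  rw [phasicP_eq]
  exact (posDef_stretchAlong hn (by positivity)).fromBlocks_zero (PosDef.one.smul (by positivity))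

theorem phasicP_mul_phasicB_isSymm (hn : n.ofLp ⬝ᵥ n.ofLp = 1) (v : EuclideanSpace ℝ (Fin d))
    (ρ c : ℝ) : (phasicP d n ρ c * phasicB d v n ρ c).IsSymm := by
  rw [phasicP_eq, phasicB_eq, fromBlocks_multiply]
  simp only [Matrix.zero_mul, add_zero, zero_add, smul_zero, Matrix.mul_smul, Matrix.smul_mul,
    Matrix.mul_one, Matrix.one_mul]
  rw [← replicateCol_mulVec, mulVec_smul, stretchAlong_mulVec_self hn]
  refine (isSymm_stretchAlong _ _).smul _ |>.fromBlocks ?_ ((isSymm_one.smul _).smul _)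
  simp only [transpose_replicateCol, ← replicateRow_smul, smul_smul]
  congr 2
  -- both sides are `ρ / (2c²)`, also when `ρ = 0` or `c = 0` and `⁻¹`, `/` take junk values
  rcases eq_or_ne c 0 with rfl | hc
  · simp
  rcases eq_or_ne ρ 0 with rfl | hρ
  · simp
  field_simp

end Phasic

theorem phasicP_symmetrizer_general (d : ℕ) (n : EuclideanSpace ℝ (Fin d))
    (hn : ‖n‖ = 1) (v : EuclideanSpace ℝ (Fin d)) (ρ : ℝ) (hρ : ρ ≠ 0)
    (c : ℝ) (hc : c ≠ 0) :
    (phasicP d n ρ c).IsSymm ∧ (phasicP d n ρ c).PosDef ∧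
      (phasicP d n ρ c * phasicB d v n ρ c).IsSymm := by
  have hn' : n.ofLp ⬝ᵥ n.ofLp = 1 := by
    simpa [hn] using (EuclideanSpace.inner_eq_star_dotProduct n n).symm
  have hP := phasicP_posDef hn' hρ hc
  exact ⟨isHermitian_iff_isSymm.mp hP.isHermitian, hP, phasicP_mul_phasicB_isSymm hn' v ρ c⟩

/-- `P` is a symmetrizer of the phasic coefficient matrix `B(v,ρ,c,n)`:
`P` is symmetric and positive definite, and `P·B` is symmetric. -/
theorem phasicP_symmetrizer (d : ℕ) (hd : 1 ≤ d) (n : EuclideanSpace ℝ (Fin d))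
    (hn : ‖n‖ = 1) (v : EuclideanSpace ℝ (Fin d)) (ρ : ℝ) (hρ : ρ ≠ 0)
    (c : ℝ) (hc : c ≠ 0) :
    (phasicP d n ρ c).IsSymm ∧ (phasicP d n ρ c).PosDef ∧
      (phasicP d n ρ c * phasicB d v n ρ c).IsSymm :=
  phasicP_symmetrizer_general d n hn v ρ hρ c hc
end

section
/- Let r ≥ 1 and m ≥ 1, let V ∈ ℝ, let A be a real m×r matrix, and let B be a real m×m matrix that is diagonalizable over ℝ (i.e., B = R·Λ·R⁻¹ for some invertible real R and real diagonal Λ). Assume V is not an eigenvalue of B. Then the block lower-triangular matrix M of size r+m with top-left block V·I_r, top-right block 0, bottom-left block A and bottom-right block B admits a symmetrizer: there exists a symmetric positive definite real matrix P of size r+m such that P·M is symmetric. -/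
/-! Non-resonance makes `V • 1 - B` invertible, so `X = (V • 1 - B)⁻¹ A` solves the Sylvester
equation `X V - B X = A`. With `B R = R Λ`, the matrix `S = [[1, 0], [X, R]]` then conjugates
`M` to the diagonal matrix `diag(V • 1, Λ)`, which `1` symmetrizes; since symmetrizers transport
along similarities, `S⁻ᵀ S⁻¹` symmetrizes `M`. -/

open Matrix

namespace Matrix

section Symmetrizer

variable {n : Type*} [Fintype n] [DecidableEq n]

def IsSymmetrizer (P M : Matrix n n ℝ) : Prop :=
  P.IsSymm ∧ P.PosDef ∧ (P * M).IsSymm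

lemma isSymmetrizer_one_of_isSymm {D : Matrix n n ℝ} (hD : D.IsSymm) : IsSymmetrizer 1 D :=
  ⟨isSymm_one, .one, by rwa [Matrix.one_mul]⟩

lemma IsSymmetrizer.of_mul_eq_mul {P D M S : Matrix n n ℝ} (hP : IsSymmetrizer P D)
    (hS : IsUnit S.det) (hMS : M * S = S * D) : IsSymmetrizer (S⁻¹ᵀ * P * S⁻¹) M := by
  obtain ⟨hPsymm, hPdef, hPD⟩ := hP
  have hSinv : S⁻¹ * M = D * S⁻¹ := by
    calc S⁻¹ * M = S⁻¹ * (M * S) * S⁻¹ := by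
          rw [Matrix.mul_assoc, Matrix.mul_assoc, mul_nonsing_inv _ hS, Matrix.mul_one]
      _ = D * S⁻¹ := by rw [hMS, ← Matrix.mul_assoc, nonsing_inv_mul _ hS, Matrix.one_mul]
  refine ⟨?_, ?_, ?_⟩
  · simp [IsSymm, Matrix.transpose_mul, hPsymm.eq, Matrix.mul_assoc]
  · rw [← conjTranspose_eq_transpose_of_trivial]
    exact hPdef.conjTranspose_mul_mul_same
      (mulVec_injective_iff_isUnit.mpr <| (isUnit_iff_isUnit_det _).mpr <|
        isUnit_nonsing_inv_det S hS)
  · rw [Matrix.mul_assoc, hSinv, IsSymm, ← Matrix.mul_assoc, Matrix.mul_assoc _ P D,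
      transpose_mul, transpose_mul, hPD.eq, transpose_transpose]
    simp only [Matrix.mul_assoc]

end Symmetrizer

lemma fromBlocks_zero₁₂_mul_fromBlocks_eq {l n α : Type*} [Fintype l] [DecidableEq l]
    [Fintype n] [Ring α] {T : Matrix l l α} {A X : Matrix n l α} {B R Λ : Matrix n n α}
    (hX : X * T - B * X = A) (hR : B * R = R * Λ) :
    fromBlocks T 0 A B * fromBlocks 1 0 X R = fromBlocks 1 0 X R * fromBlocks T 0 0 Λ := by
  rw [fromBlocks_multiply, fromBlocks_multiply, ← hX, hR]
  congr 1 <;> simp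

variable {l n K : Type*} [Fintype l] [DecidableEq l] [Fintype n] [DecidableEq n] [Field K]

lemma isUnit_det_smul_one_sub_of_not_eigenvalue {B : Matrix n n K} {V : K}
    (hV : ∀ x, B *ᵥ x = V • x → x = 0) : IsUnit (V • (1 : Matrix n n K) - B).det := by
  rw [← isUnit_iff_isUnit_det, ← mulVec_injective_iff_isUnit]
  intro x y hxy
  refine sub_eq_zero.mp (hV (x - y) ?_)
  simp only [sub_mulVec, smul_mulVec, one_mulVec, mulVec_sub] at hxy ⊢
  linear_combination (norm := module) -hxy

lemma inv_smul_one_sub_mul_solves_sylvester {B : Matrix n n K} {V : K}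
    (hB : IsUnit (V • (1 : Matrix n n K) - B).det) (A : Matrix n l K) :
    (V • 1 - B)⁻¹ * A * (V • 1 : Matrix l l K) - B * ((V • 1 - B)⁻¹ * A) = A := by
  rw [Matrix.mul_smul, Matrix.mul_one, ← Matrix.one_mul ((V • 1 - B)⁻¹ * A),
    ← Matrix.smul_mul, Matrix.one_mul, ← Matrix.sub_mul, ← Matrix.mul_assoc,
    mul_nonsing_inv _ hB, Matrix.one_mul]

end Matrix

theorem blockTriangular_symmetrizer_general (r m : ℕ) (V : ℝ)
    (A : Matrix (Fin m) (Fin r) ℝ) (B : Matrix (Fin m) (Fin m) ℝ)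
    (hdiag : ∃ (R : Matrix (Fin m) (Fin m) ℝ) (Λ : Fin m → ℝ),
      IsUnit R.det ∧ B = R * Matrix.diagonal Λ * R⁻¹)
    (hV : ∀ x : Fin m → ℝ, B.mulVec x = V • x → x = 0) :
    ∃ P : Matrix (Fin r ⊕ Fin m) (Fin r ⊕ Fin m) ℝ,
      P.IsSymm ∧ P.PosDef ∧
        (P * Matrix.fromBlocks (V • (1 : Matrix (Fin r) (Fin r) ℝ)) 0 A B).IsSymm := by
  obtain ⟨R, Λ, hR, hB⟩ := hdiag
  have hBR : B * R = R * diagonal Λ := by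
    rw [hB, Matrix.mul_assoc, nonsing_inv_mul _ hR, Matrix.mul_one]
  have hS : IsUnit (fromBlocks 1 0 ((V • 1 - B)⁻¹ * A) R).det := by
    rwa [det_fromBlocks_zero₁₂, det_one, one_mul]
  have hD : (fromBlocks (V • 1 : Matrix (Fin r) (Fin r) ℝ) 0 0 (diagonal Λ)).IsSymm := by
    simp [IsSymm, fromBlocks_transpose]
  have hX := inv_smul_one_sub_mul_solves_sylvester (isUnit_det_smul_one_sub_of_not_eigenvalue hV) A
  exact ⟨_, (isSymmetrizer_one_of_isSymm hD).of_mul_eq_mul hS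
    (fromBlocks_zero₁₂_mul_fromBlocks_eq hX hBR)⟩

/-- Abstract symmetrization theorem for the quasi-1D barotropic Baer–Nunziato system:
if `B` is diagonalizable over `ℝ` and `V` is not an eigenvalue of `B`, then the block
lower-triangular matrix `M = [[V·I_r, 0], [A, B]]` admits a symmetrizer, i.e. a
symmetric positive definite matrix `P` such that `P·M` is symmetric. -/
theorem blockTriangular_symmetrizer (r m : ℕ) (hr : 1 ≤ r) (hm : 1 ≤ m) (V : ℝ)
    (A : Matrix (Fin m) (Fin r) ℝ) (B : Matrix (Fin m) (Fin m) ℝ)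
    (hdiag : ∃ (R : Matrix (Fin m) (Fin m) ℝ) (Λ : Fin m → ℝ),
      IsUnit R.det ∧ B = R * Matrix.diagonal Λ * R⁻¹)
    (hV : ∀ x : Fin m → ℝ, B.mulVec x = V • x → x = 0) :
    ∃ P : Matrix (Fin r ⊕ Fin m) (Fin r ⊕ Fin m) ℝ,
      P.IsSymm ∧ P.PosDef ∧
        (P * Matrix.fromBlocks (V • (1 : Matrix (Fin r) (Fin r) ℝ)) 0 A B).IsSymm :=
  blockTriangular_symmetrizer_general r m V A B hdiag hV
end

section
/- Let d ≥ 1 and K ≥ 2, let p_1,…,p_K ∈ ℝ, and let β_1,…,β_K ∈ [0,1] with Σ_{k=1}^K β_k = 1. Define the interfacial pressures P_{k,l} := β_k·p_l + (1 − β_k)·p_k for k ≠ l. Then: (a) for every l ∈ {1,…,K}, Σ_{k≠l} P_{k,l} = Σ_{k=1}^K (1 − β_k)·p_k; in particular this sum is independent of l (conservation constraint), and the common value P_I = Σ_k (1−β_k)p_k is positive whenever all p_k > 0. (b) For all velocities v_1,…,v_K ∈ ℝ^d, setting V := Σ_{k=1}^K β_k·v_k, and for all vectors g_1,…,g_K ∈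 ℝ^d with Σ_{l=1}^K g_l = 0, the interfacial entropy production vanishes: Σ_{k=1}^K Σ_{l≠k} (P_{k,l} − p_k)·((V − v_k)·g_l) = 0. (c) Uniqueness: if Q_{k,l} (k ≠ l) are real numbers such that Σ_{k≠l} Q_{k,l} is independent of l and such that Σ_{k=1}^K Σ_{l≠k} (Q_{k,l} − p_k)·((V − v_k)·g_l) = 0 holds for ALL choices of v_1,…,v_K ∈ ℝ^d and all g_1,…,g_K with Σ_l g_l = 0, then Q_{k,l} = P_{k,l} for all k ≠ l. -/
/-!
Write the entropy production as `Π = ∑ l, ⟪w l, g l⟫` with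
`w l = ∑ k ≠ l, (P k l - p k) • (V - v k)`. It vanishes for every zero-sum family `g` exactly
when `w l` does not depend on `l`. For `P k l - p k = β k * (p l - p k)` the `l`-dependent part
of `w l` is `p l • ∑ k, β k • (V - v k) = 0`. Conversely, for `v = Pi.single k e` one gets
`w l - w k = (β k * (S l - S k) - (Q k l - p k)) • e` with `S m = ∑ k' ≠ m, (Q k' m - p k')`,
and the conservation constraint turns `S l - S k` into `p l - p k`.
-/

open scoped RealInnerProductSpace
open Finset

def interfacialPressure {ι : Type*} (β p : ι → ℝ) (k l : ι) : ℝ := β k * p l + (1 - β k) * p k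

theorem interfacialPressure_sub {ι : Type*} {β p : ι → ℝ} (k l : ι) :
    interfacialPressure β p k l - p k = β k * (p l - p k) := by
  unfold interfacialPressure
  ring

section

variable {ι E : Type*} [Fintype ι] [NormedAddCommGroup E] [InnerProductSpace ℝ E] {β p : ι → ℝ}

theorem sum_smul_sub_sum_smul (hβ : ∑ k, β k = 1) (v : ι → E) :
    ∑ k, β k • (∑ j, β j • v j - v k) = 0 := by
  simp only [smul_sub, sum_sub_distrib, ← sum_smul, hβ, one_smul, sub_self]

theorem sum_one_sub_mul_pos (hβ : ∀ k, β k ≤ 1) (hβsum : ∑ k, β k = 1)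
    (hι : 1 < Fintype.card ι) (hp : ∀ k, 0 < p k) : 0 < ∑ k, (1 - β k) * p k := by
  obtain ⟨k, -, hk⟩ : ∃ k ∈ univ, β k < 1 :=
    exists_lt_of_sum_lt (by simpa [hβsum] using hι)
  exact sum_pos' (fun j _ => mul_nonneg (sub_nonneg.2 (hβ j)) (hp j).le)
    ⟨k, mem_univ k, mul_pos (sub_pos.2 hk) (hp k)⟩

variable [DecidableEq ι]

theorem forall_sum_inner_eq_zero_iff (w : ι → E) :
    (∀ g : ι → E, ∑ l, g l = 0 → ∑ l, ⟪w l, g l⟫ = 0) ↔ ∀ l m, w l = w m := by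
  constructor
  · intro h l m
    refine ext_inner_right ℝ fun x => ?_
    have inner_single (i : ι) : ∑ j, ⟪w j, (Pi.single i x : ι → E) j⟫ = ⟪w i, x⟫ := by
      rw [Fintype.sum_eq_single i fun j hj => by rw [Pi.single_eq_of_ne hj, inner_zero_right]]
      simp
    have := h (Pi.single l x - Pi.single m x) (by simp)
    simpa only [Pi.sub_apply, inner_sub_right, sum_sub_distrib, inner_single, sub_eq_zero]
      using this
  · intro h g hg
    cases isEmpty_or_nonempty ι with
    | inl _ => simp
    | inr hne =>
      obtain ⟨l₀⟩ := hne
      simp only [h _ l₀, ← inner_sum, hg, inner_zero_right]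

theorem sum_sum_erase_mul_inner_eq (R : ι → ι → ℝ) (V : E) (v g : ι → E) :
    ∑ k, ∑ l ∈ univ.erase k, R k l * ⟪V - v k, g l⟫ =
      ∑ l, ⟪∑ k ∈ univ.erase l, R k l • (V - v k), g l⟫ := by
  rw [sum_comm' (t' := univ) (s' := fun l => univ.erase l) (by simp [and_comm, ne_comm])]
  simp only [sum_inner, real_inner_smul_left]

theorem sum_erase_smul_sub_single (r : ι → ℝ) (m k : ι) (e : E) :
    ∑ k' ∈ univ.erase m, r k' • (∑ j, β j • Pi.single k e j - Pi.single k e k') =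
      (β k * ∑ k' ∈ univ.erase m, r k' - if k = m then 0 else r k) • e := by
  have hV : ∑ j, β j • (Pi.single k e : ι → E) j = β k • e := by simp [Pi.single_apply]
  have hsingle : ∑ k' ∈ univ.erase m, r k' • (Pi.single k e : ι → E) k' =
      (if k = m then 0 else r k) • e := by
    split_ifs with hkm <;> simp [Pi.single_apply, hkm]
  simp only [hV, smul_sub, sum_sub_distrib, hsingle, ← sum_smul]
  module

theorem sum_erase_interfacialPressure (hβ : ∑ k, β k = 1) (l : ι) :
    ∑ k ∈ univ.erase l, interfacialPressure β p k l = ∑ k, (1 - β k) * p k := by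
  simp only [interfacialPressure, sum_add_distrib, ← sum_mul, sum_erase_eq_sub (mem_univ l), hβ]
  ring

theorem sum_erase_interfacialPressure_sub_smul (hβ : ∑ k, β k = 1) (v : ι → E) (l : ι) :
    ∑ k ∈ univ.erase l, (interfacialPressure β p k l - p k) • (∑ j, β j • v j - v k) =
      -∑ k, (β k * p k) • (∑ j, β j • v j - v k) := by
  rw [sum_erase_eq_sub (mem_univ l)]
  simp only [interfacialPressure_sub, sub_self, mul_zero, zero_smul, sub_zero, mul_sub, sub_smul,
    sum_sub_distrib, mul_comm (β _) (p l), mul_smul, ← smul_sum, sum_smul_sub_sum_smul hβ,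
    smul_zero, zero_sub]

theorem eq_interfacialPressure_of_entropyProduction_eq_zero [Nontrivial E]
    {Q : ι → ι → ℝ} (hQ : ∀ l l', ∑ k ∈ univ.erase l, Q k l = ∑ k ∈ univ.erase l', Q k l')
    (hprod : ∀ v g : ι → E, ∑ l, g l = 0 →
      ∑ k, ∑ l ∈ univ.erase k, (Q k l - p k) * ⟪∑ j, β j • v j - v k, g l⟫ = 0)
    {k l : ι} (hkl : k ≠ l) : Q k l = interfacialPressure β p k l := by
  obtain ⟨e, he⟩ := exists_ne (0 : E)
  have hw := (forall_sum_inner_eq_zero_iff _).1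
    (fun g hg => (sum_sum_erase_mul_inner_eq _ _ _ _).symm.trans (hprod (Pi.single k e) g hg)) l k
  rw [sum_erase_smul_sub_single, sum_erase_smul_sub_single, if_neg hkl, if_pos rfl] at hw
  have hcoeff := smul_left_injective ℝ he hw
  have hS : ∑ k' ∈ univ.erase l, (Q k' l - p k') - ∑ k' ∈ univ.erase k, (Q k' k - p k') =
      p l - p k := by
    rw [sum_sub_distrib, sum_sub_distrib, hQ l k, sub_sub_sub_cancel_left,
      sum_erase_eq_sub (mem_univ l), sum_erase_eq_sub (mem_univ k)]
    ring
  unfold interfacialPressure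
  linear_combination -hcoeff + β k * hS

end

/-- Entropy production due to interfacial states: with interfacial velocity
`V = Σ β_k v_k` (a convex combination of the phasic velocities), the interfacial
pressures `P_{k,l} = β_k p_l + (1 − β_k) p_k` (a) satisfy the conservation constraint
`Σ_{k≠l} P_{k,l} = Σ_k (1−β_k) p_k` for every `l` (a positive quantity when all `p_k > 0`),
(b) make the interfacial entropy production vanish for all velocities and all zero-sum
families `g_l`, and (c) are the unique such interfacial pressures. -/
theorem interfacial_pressures_unique (d K : ℕ) (hd : 1 ≤ d) (hK : 2 ≤ K)
    (p β : Fin K → ℝ) (hβ : ∀ k, β k ∈ Set.Icc (0 : ℝ) 1) (hβsum : ∑ k, β k = 1) :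
    (∀ l : Fin K, ∑ k ∈ univ.erase l, (β k * p l + (1 - β k) * p k)
        = ∑ k, (1 - β k) * p k) ∧
    ((∀ k, 0 < p k) → 0 < ∑ k, (1 - β k) * p k) ∧
    (∀ (v g : Fin K → EuclideanSpace ℝ (Fin d)), ∑ l, g l = 0 →
      ∑ k, ∑ l ∈ univ.erase k,
          ((β k * p l + (1 - β k) * p k) - p k) * ⟪(∑ j, β j • v j) - v k, g l⟫ = 0) ∧
    (∀ Q : Fin K → Fin K → ℝ,
      (∀ l l' : Fin K, ∑ k ∈ univ.erase l, Q k l = ∑ k ∈ univ.erase l', Q k l') →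
      (∀ (v g : Fin K → EuclideanSpace ℝ (Fin d)), ∑ l, g l = 0 →
        ∑ k, ∑ l ∈ univ.erase k,
            (Q k l - p k) * ⟪(∑ j, β j • v j) - v k, g l⟫ = 0) →
      ∀ k l, k ≠ l → Q k l = β k * p l + (1 - β k) * p k) := by
  have : Nonempty (Fin d) := ⟨⟨0, hd⟩⟩
  refine ⟨sum_erase_interfacialPressure hβsum,
    sum_one_sub_mul_pos (fun k => (hβ k).2) hβsum (by rw [Fintype.card_fin]; omega), fun v g hg => ?_,
    fun Q hQ hprod k l => eq_interfacialPressure_of_entropyProduction_eq_zero hQ hprod⟩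
  rw [sum_sum_erase_mul_inner_eq]
  refine (forall_sum_inner_eq_zero_iff _).2 (fun l m => ?_) g hg
  exact (sum_erase_interfacialPressure_sub_smul hβsum v l).trans
    (sum_erase_interfacialPressure_sub_smul hβsum v m).symm
end

section
/- Let d ≥ 1, let θ ≥ 0 and a ≥ 0, let 0 < c ≤ 1, let g_1, g_2 ∈ ℝ with g_1 ≠ g_2, let p_1, p_2 ∈ ℝ, and let v_1, v_2 ∈ ℝ^d. Set the mass flux ṁ := a·(g_2 − g_1), the interfacial velocity v̂ := (v_1 + v_2)/2, and the interfacial density ϱ := (p_2 − p_1)/(c·(g_2 − g_1)), assuming p_1 ≠ p_2 so that ϱ ≠ 0. Then: (i) ‖v̂ − v_1‖² = ‖v̂ − v_2‖², so the entropy production is independent of the velocities; (ii) the entropy production due to relaxation of the Gibbs free energies satisfies S_U^μ := −θ·ṁ·( g_2 − g_1 + (p_1 − p_2)/ϱ ) = −θ·a·(1 − c)·(g_2 − g_1)², and hence S_U^μ ≤ 0. -/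
/-! The interfacial density `ϱ` is chosen so that `(p₁ - p₂) / ϱ = -c (g₂ - g₁)`; the bracket
in the entropy production then collapses to `(1 - c)(g₂ - g₁)`, leaving the manifestly
nonpositive `-θ a (1 - c)(g₂ - g₁)²`. The velocity terms cancel because the midpoint is
equidistant from both endpoints. -/

theorem norm_half_smul_add_sub_left_eq_right {E : Type*} [SeminormedAddCommGroup E] [Module ℝ E]
    (x y : E) : ‖(1 / 2 : ℝ) • (x + y) - x‖ = ‖(1 / 2 : ℝ) • (x + y) - y‖ := by
  rw [← norm_neg]
  congr 1
  module

theorem sub_div_sub_div_eq_neg {K : Type*} [Field K] {a b : K} (hab : a ≠ b) (x : K) :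
    (a - b) / ((b - a) / x) = -x := by
  rw [← neg_sub a b, neg_div, div_neg, div_div_cancel₀ (sub_ne_zero.mpr hab)]

theorem gibbs_relaxation_entropy_production_general (d : ℕ)
    (θ a c : ℝ) (hθ : 0 ≤ θ) (ha : 0 ≤ a) (hc1 : c ≤ 1)
    (g₁ g₂ p₁ p₂ : ℝ) (hp : p₁ ≠ p₂)
    (v₁ v₂ : EuclideanSpace ℝ (Fin d)) :
    (‖(1 / 2 : ℝ) • (v₁ + v₂) - v₁‖ ^ 2 = ‖(1 / 2 : ℝ) • (v₁ + v₂) - v₂‖ ^ 2) ∧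
    (-θ * (a * (g₂ - g₁)) * (g₂ - g₁ + (p₁ - p₂) / ((p₂ - p₁) / (c * (g₂ - g₁))))
      = -θ * a * (1 - c) * (g₂ - g₁) ^ 2) ∧
    (-θ * a * (1 - c) * (g₂ - g₁) ^ 2 ≤ 0) := by
  refine ⟨by rw [norm_half_smul_add_sub_left_eq_right], ?_, ?_⟩
  · rw [sub_div_sub_div_eq_neg hp]
    ring
  · have hc : 0 ≤ 1 - c := sub_nonneg.mpr hc1
    have : 0 ≤ θ * a * (1 - c) * (g₂ - g₁) ^ 2 := by positivity
    linarith

/-- Entropy production due to relaxation of the Gibbs free energies (two-component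
isothermal model): with mass flux `ṁ = a(g₂ − g₁)`, interfacial velocity
`v̂ = (v₁ + v₂)/2` and interfacial density `ϱ = (p₂ − p₁)/(c(g₂ − g₁))`, `0 < c ≤ 1`:
(i) `‖v̂ − v₁‖² = ‖v̂ − v₂‖²`;
(ii) `S_U^μ = −θṁ(g₂ − g₁ + (p₁ − p₂)/ϱ) = −θa(1 − c)(g₂ − g₁)² ≤ 0`. -/
theorem gibbs_relaxation_entropy_production (d : ℕ) (hd : 1 ≤ d)
    (θ a c : ℝ) (hθ : 0 ≤ θ) (ha : 0 ≤ a) (hc0 : 0 < c) (hc1 : c ≤ 1)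
    (g₁ g₂ p₁ p₂ : ℝ) (hg : g₁ ≠ g₂) (hp : p₁ ≠ p₂)
    (v₁ v₂ : EuclideanSpace ℝ (Fin d)) :
    (‖(1 / 2 : ℝ) • (v₁ + v₂) - v₁‖ ^ 2 = ‖(1 / 2 : ℝ) • (v₁ + v₂) - v₂‖ ^ 2) ∧
    (-θ * (a * (g₂ - g₁)) * (g₂ - g₁ + (p₁ - p₂) / ((p₂ - p₁) / (c * (g₂ - g₁))))
      = -θ * a * (1 - c) * (g₂ - g₁) ^ 2) ∧
    (-θ * a * (1 - c) * (g₂ - g₁) ^ 2 ≤ 0) :=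
  gibbs_relaxation_entropy_production_general d θ a c hθ ha hc1 g₁ g₂ p₁ p₂ hp v₁ v₂
end

section
/- Let θ ≥ 0, a ≥ 0, κ ∈ ℝ, let g_1, g_2 ∈ ℝ, and let α_1 > 0, α_3 > 0. Define the chemical potentials μ_1 := g_1 + κ·ln( α_1/(α_1 + α_3) ) and μ_2 := g_2, and the mass flux ṁ := a·(μ_2 − μ_1). Then the total entropy production satisfies the identity −θ·ṁ·(g_2 − g_1) + θ·ṁ·κ·ln( α_1/(α_1 + α_3) ) = −θ·a·(μ_2 − μ_1)², and hence it is non-positive: S_U^μ − T_ref·S_{S_M}^μ = −θ·ṁ·(μ_2 − μ_1) ≤ 0. -/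
/-! The entropy of mixing turns the vapour's Gibbs energy `g₁` into its chemical potential
`μ₁ = g₁ + s`, so the two productions combine to `−θ ṁ (μ₂ − μ₁)`; with the kinetic relation
`ṁ = a (μ₂ − μ₁)` this is `−θ a (μ₂ − μ₁)²`, a nonpositive multiple of a square. -/

theorem relaxation_entropy_production_eq {R : Type*} [CommRing R] (θ a g₁ g₂ s : R) :
    -θ * (a * (g₂ - (g₁ + s))) * (g₂ - g₁) + θ * (a * (g₂ - (g₁ + s))) * s
      = -θ * a * (g₂ - (g₁ + s)) ^ 2 := by
  ring

theorem neg_mul_mul_mul_self_nonpos {R : Type*} [CommRing R] [LinearOrder R]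
    [IsStrictOrderedRing R] {θ a : R} (hθ : 0 ≤ θ) (ha : 0 ≤ a) (d : R) :
    -θ * (a * d) * d ≤ 0 := by
  have hsq : 0 ≤ θ * a * (d * d) := mul_nonneg (mul_nonneg hθ ha) (mul_self_nonneg d)
  linear_combination hsq

theorem chemical_potential_relaxation_entropy_production_general
    (θ a κ g₁ g₂ α₁ α₃ : ℝ) (hθ : 0 ≤ θ) (ha : 0 ≤ a) :
    (-θ * (a * (g₂ - (g₁ + κ * Real.log (α₁ / (α₁ + α₃))))) * (g₂ - g₁)
        + θ * (a * (g₂ - (g₁ + κ * Real.log (α₁ / (α₁ + α₃)))))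
            * (κ * Real.log (α₁ / (α₁ + α₃)))
      = -θ * a * (g₂ - (g₁ + κ * Real.log (α₁ / (α₁ + α₃)))) ^ 2) ∧
    (-θ * (a * (g₂ - (g₁ + κ * Real.log (α₁ / (α₁ + α₃)))))
        * (g₂ - (g₁ + κ * Real.log (α₁ / (α₁ + α₃)))) ≤ 0) :=
  ⟨relaxation_entropy_production_eq θ a g₁ g₂ _, neg_mul_mul_mul_self_nonpos hθ ha _⟩

/-- Entropy production due to relaxation of chemical potentials (three-component
isothermal model, homogeneous mixture): with `μ₁ = g₁ + κ ln(α₁/(α₁+α₃))`, `μ₂ = g₂`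
and mass flux `ṁ = a(μ₂ − μ₁)`, the total entropy production satisfies
`−θṁ(g₂ − g₁) + θṁκ ln(α₁/(α₁+α₃)) = −θa(μ₂ − μ₁)²` and hence
`S_U^μ − T_ref S_{S_M}^μ = −θṁ(μ₂ − μ₁) ≤ 0`. -/
theorem chemical_potential_relaxation_entropy_production
    (θ a κ g₁ g₂ α₁ α₃ : ℝ) (hθ : 0 ≤ θ) (ha : 0 ≤ a)
    (hα₁ : 0 < α₁) (hα₃ : 0 < α₃) :
    (-θ * (a * (g₂ - (g₁ + κ * Real.log (α₁ / (α₁ + α₃))))) * (g₂ - g₁)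
        + θ * (a * (g₂ - (g₁ + κ * Real.log (α₁ / (α₁ + α₃)))))
            * (κ * Real.log (α₁ / (α₁ + α₃)))
      = -θ * a * (g₂ - (g₁ + κ * Real.log (α₁ / (α₁ + α₃)))) ^ 2) ∧
    (-θ * (a * (g₂ - (g₁ + κ * Real.log (α₁ / (α₁ + α₃)))))
        * (g₂ - (g₁ + κ * Real.log (α₁ / (α₁ + α₃)))) ≤ 0) :=
  chemical_potential_relaxation_entropy_production_general θ a κ g₁ g₂ α₁ α₃ hθ ha
end

section
/- Let K ≥ 1, let C_1,…,C_K > 0, let π ∈ ℝ, and let α_1⁰,…,α_K⁰ ∈ (0,1) with Σ_{k=1}^K α_k⁰ = 1 and ρ_1⁰,…,ρ_K⁰ > 0. Define ρ_j^∞ := (1/C_j)·Σ_{k=1}^K α_k⁰ ρ_k⁰ C_k and α_j^∞ := α_j⁰ ρ_j⁰ / ρ_j^∞ for j = 1,…,K. Then: (i) ρ_j^∞ > 0 and α_j^∞ ∈ (0,1) for all j; (ii) Σ_{j=1}^K α_j^∞ = 1 (saturation); (iii) α_j^∞ ρ_j^∞ = α_j⁰ ρ_j⁰ for all j (mass conservation);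 (iv) the pressures are in equilibrium: C_j ρ_j^∞ − π = C_i ρ_i^∞ − π for all i, j, with common value p^∞ = Σ_k α_k⁰ ρ_k⁰ C_k − π > −π. Moreover this equilibrium is unique: if ρ_j > 0 and α_j ∈ (0,1) satisfy Σ_j α_j = 1, α_j ρ_j = α_j⁰ ρ_j⁰ for all j, and C_j ρ_j − π is independent of j, then ρ_j = ρ_j^∞ and α_j = α_j^∞ for all j. -/
open Finset

/-!
At a common pressure `P = C_j ρ_j`, mass conservation `α_j ρ_j = m_j` (with `m_j = α_j⁰ ρ_j⁰`)
forces `α_j = m_j C_j / P`, so saturation forces `P = Σ_k m_k C_k`; this pins down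
`ρ_j = P / C_j` and then `α_j`. Conversely these values satisfy all constraints, and
`α_j^∞ < 1` because `α_j⁰ < 1` guarantees a second phase, whose positive contribution
makes `m_j C_j < P`.
-/

section

variable {ι : Type*} [Fintype ι]

theorem exists_ne_of_lt_sum {M : Type*} [AddCommMonoid M] [Preorder M] {g : ι → M} {j : ι}
    (h : g j < ∑ k, g k) : ∃ i, i ≠ j := by
  by_contra! hall
  rw [Fintype.sum_eq_single j fun i hi => (hi (hall i)).elim] at h
  exact lt_irrefl _ h

theorem lt_sum_of_pos_of_lt_sum {M N : Type*} [AddCommMonoid M] [PartialOrder M]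
    [IsOrderedCancelAddMonoid M] [AddCommMonoid N] [Preorder N] {f : ι → M} {g : ι → N}
    (hf : ∀ k, 0 < f k) {j : ι} (hg : g j < ∑ k, g k) : f j < ∑ k, f k := by
  obtain ⟨i, hij⟩ := exists_ne_of_lt_sum hg
  exact single_lt_sum hij (mem_univ j) (mem_univ i) (hf i) fun k _ _ => (hf k).le

variable {𝕜 : Type*} [Field 𝕜]

theorem volume_fraction_eq_of_pressure {α ρ m C P : 𝕜} (hC : C ≠ 0) (hρ : ρ ≠ 0)
    (hmass : α * ρ = m) (hpress : C * ρ = P) : α = m * C / P := by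
  rw [← hmass, ← hpress, eq_div_iff (mul_ne_zero hC hρ)]
  ring

theorem common_pressure_eq_sum {C m α ρ : ι → 𝕜} {P : 𝕜} (hC : ∀ k, C k ≠ 0)
    (hρ : ∀ k, ρ k ≠ 0) (hmass : ∀ k, α k * ρ k = m k) (hpress : ∀ k, C k * ρ k = P)
    (hsat : ∑ k, α k = 1) : P = ∑ k, m k * C k := by
  have hsum : (∑ k, m k * C k) / P = 1 := by
    rw [sum_div, ← hsat]
    exact sum_congr rfl fun k _ =>
      (volume_fraction_eq_of_pressure (hC k) (hρ k) (hmass k) (hpress k)).symm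
  obtain hP | hP := eq_or_ne P 0
  · simp [hP] at hsum
  · exact ((div_eq_one_iff_eq hP).1 hsum).symm

end

theorem isothermal_pressure_relaxation_equilibrium_general (K : ℕ)
    (C : Fin K → ℝ) (hC : ∀ k, 0 < C k) (piMin : ℝ)
    (α₀ ρ₀ : Fin K → ℝ) (hα₀ : ∀ k, α₀ k ∈ Set.Ioo (0 : ℝ) 1)
    (hsat₀ : ∑ k, α₀ k = 1) (hρ₀ : ∀ k, 0 < ρ₀ k)
    (rhoInf alphaInf : Fin K → ℝ)
    (hrhoInf : ∀ j, rhoInf j = (1 / C j) * ∑ k, α₀ k * ρ₀ k * C k)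
    (halphaInf : ∀ j, alphaInf j = α₀ j * ρ₀ j / rhoInf j) :
    (∀ j, 0 < rhoInf j) ∧
    (∀ j, alphaInf j ∈ Set.Ioo (0 : ℝ) 1) ∧
    (∑ j, alphaInf j = 1) ∧
    (∀ j, alphaInf j * rhoInf j = α₀ j * ρ₀ j) ∧
    (∀ i j, C j * rhoInf j - piMin = C i * rhoInf i - piMin) ∧
    (∀ j, C j * rhoInf j - piMin = (∑ k, α₀ k * ρ₀ k * C k) - piMin) ∧
    (-piMin < (∑ k, α₀ k * ρ₀ k * C k) - piMin) ∧
    (∀ ρ α : Fin K → ℝ, (∀ j, 0 < ρ j) → (∀ j, α j ∈ Set.Ioo (0 : ℝ) 1) →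
      (∑ j, α j = 1) → (∀ j, α j * ρ j = α₀ j * ρ₀ j) →
      (∀ i j, C j * ρ j - piMin = C i * ρ i - piMin) →
      ∀ j, ρ j = rhoInf j ∧ α j = alphaInf j) := by
  set S := ∑ k, α₀ k * ρ₀ k * C k
  have hw : ∀ k, 0 < α₀ k * ρ₀ k * C k := fun k => by
    have := (hα₀ k).1; have := hρ₀ k; have := hC k; positivity
  have hw_lt : ∀ j, α₀ j * ρ₀ j * C j < S := fun j =>
    lt_sum_of_pos_of_lt_sum hw (hsat₀ ▸ (hα₀ j).2)
  have hS : 0 < S := sum_pos (fun k _ => hw k) (nonempty_of_sum_ne_zero (hsat₀ ▸ one_ne_zero))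
  have hrho_pos : ∀ j, 0 < rhoInf j := fun j => by
    have := hC j; rw [hrhoInf]; positivity
  have hpress : ∀ j, C j * rhoInf j = S := fun j => by
    rw [hrhoInf, ← mul_assoc, mul_one_div_cancel (hC j).ne', one_mul]
  have hmass : ∀ j, alphaInf j * rhoInf j = α₀ j * ρ₀ j := fun j => by
    rw [halphaInf]; exact div_mul_cancel₀ _ (hrho_pos j).ne'
  have halpha : ∀ j, alphaInf j = α₀ j * ρ₀ j * C j / S := fun j =>
    volume_fraction_eq_of_pressure (hC j).ne' (hrho_pos j).ne' (hmass j) (hpress j)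
  refine ⟨hrho_pos, fun j => ?_, ?_, hmass, fun i j => by rw [hpress, hpress],
    fun j => by rw [hpress], by linarith, ?_⟩
  · rw [halpha]; exact ⟨div_pos (hw j) hS, (div_lt_one hS).2 (hw_lt j)⟩
  · simp_rw [halpha]; rw [← sum_div, div_self hS.ne']
  · intro ρ α hρ _ hsat hmass' hpeq j
    have hPS : C j * ρ j = S := common_pressure_eq_sum (fun k => (hC k).ne')
      (fun k => (hρ k).ne') hmass' (fun i => by linarith [hpeq j i]) hsat
    have hρj : ρ j = rhoInf j := mul_left_cancel₀ (hC j).ne' (hPS.trans (hpress j).symm)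
    refine ⟨hρj, mul_right_cancel₀ (hρ j).ne' ?_⟩
    rw [hmass', hρj, hmass]

/-- Pressure-relaxation equilibrium for `K` isothermal stiffened gases with equal
minimal pressures `π`: `ρ_j^∞ = (1/C_j) Σ_k α_k⁰ρ_k⁰C_k` and `α_j^∞ = α_j⁰ρ_j⁰/ρ_j^∞`
define the unique equilibrium: all `ρ_j^∞ > 0`, all `α_j^∞ ∈ (0,1)`, saturation and
phasic mass conservation hold, the pressures `C_jρ_j^∞ − π` are in equilibrium with
common value `p^∞ = Σ_k α_k⁰ρ_k⁰C_k − π > −π`, and any other state satisfying the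
constraints coincides with it. -/
theorem isothermal_pressure_relaxation_equilibrium (K : ℕ) (hK : 1 ≤ K)
    (C : Fin K → ℝ) (hC : ∀ k, 0 < C k) (piMin : ℝ)
    (α₀ ρ₀ : Fin K → ℝ) (hα₀ : ∀ k, α₀ k ∈ Set.Ioo (0 : ℝ) 1)
    (hsat₀ : ∑ k, α₀ k = 1) (hρ₀ : ∀ k, 0 < ρ₀ k)
    (rhoInf alphaInf : Fin K → ℝ)
    (hrhoInf : ∀ j, rhoInf j = (1 / C j) * ∑ k, α₀ k * ρ₀ k * C k)
    (halphaInf : ∀ j, alphaInf j = α₀ j * ρ₀ j / rhoInf j) :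
    (∀ j, 0 < rhoInf j) ∧
    (∀ j, alphaInf j ∈ Set.Ioo (0 : ℝ) 1) ∧
    (∑ j, alphaInf j = 1) ∧
    (∀ j, alphaInf j * rhoInf j = α₀ j * ρ₀ j) ∧
    (∀ i j, C j * rhoInf j - piMin = C i * rhoInf i - piMin) ∧
    (∀ j, C j * rhoInf j - piMin = (∑ k, α₀ k * ρ₀ k * C k) - piMin) ∧
    (-piMin < (∑ k, α₀ k * ρ₀ k * C k) - piMin) ∧
    (∀ ρ α : Fin K → ℝ, (∀ j, 0 < ρ j) → (∀ j, α j ∈ Set.Ioo (0 : ℝ) 1) →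
      (∑ j, α j = 1) → (∀ j, α j * ρ j = α₀ j * ρ₀ j) →
      (∀ i j, C j * ρ j - piMin = C i * ρ i - piMin) →
      ∀ j, ρ j = rhoInf j ∧ α j = alphaInf j) :=
  isothermal_pressure_relaxation_equilibrium_general K C hC piMin α₀ ρ₀ hα₀ hsat₀ hρ₀ rhoInf
    alphaInf hrhoInf halphaInf
end

section
/- Let C_1, C_2 > 0, π_2 > 0, let α_1⁰, α_2⁰ ∈ (0,1) with α_1⁰ + α_2⁰ = 1, and let ρ_1⁰, ρ_2⁰ > 0. Define X_1 := ( −π_2 + α_1⁰ρ_1⁰C_1 + α_2⁰ρ_2⁰C_2 )/C_1 and X_2 := −(π_2/C_1)·α_1⁰ρ_1⁰. Then X_1²/4 − X_2 > 0, and ρ_1^∞ := X_1/2 + √(X_1²/4 − X_2) is the unique positive root of the quadratic ρ² − X_1·ρ + X_2 = 0. Moreover, setting α_1^∞ := α_1⁰ρ_1⁰/ρ_1^∞, α_2^∞ := 1 − α_1^∞ and ρ_2^∞ := α_2⁰ρ_2⁰/α_2^∞, one has: ρ_1^∞ > 0, ρ_2^∞ > 0, α_1^∞ ∈ (0,1),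 α_2^∞ ∈ (0,1), the phasic masses are conserved (α_k^∞ ρ_k^∞ = α_k⁰ ρ_k⁰ for k = 1,2), and the pressures are in equilibrium: C_1·ρ_1^∞ = C_2·ρ_2^∞ − π_2, with common value p^∞ = C_1 ρ_1^∞ > −π_2. -/
/-!
Write `m₁ = α₁⁰ρ₁⁰`, `m₂ = α₂⁰ρ₂⁰` for the phasic masses. The quadratic `ρ² − X₁ρ + X₂` has
`X₂ < 0`, so its roots have opposite signs and `X₁/2 + √(X₁²/4 − X₂)` is the only positive one.
Evaluated at `m₁` it equals `−m₁m₂C₂/C₁ < 0`, so `m₁` lies strictly below that root, which is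
exactly `α₁^∞ = m₁/ρ₁^∞ < 1`. Pressure equality is the root equation multiplied by `C₁`.
-/

open Real

noncomputable def largerRoot (b c : ℝ) : ℝ := b / 2 + √(b ^ 2 / 4 - c)

section LargerRoot

variable {b c : ℝ}

theorem sq_sub_mul_add_eq_mul_largerRoot (hdisc : 0 ≤ b ^ 2 / 4 - c) (x : ℝ) :
    x ^ 2 - b * x + c = (x - largerRoot b c) * (x - (b - largerRoot b c)) := by
  have hsq : √(b ^ 2 / 4 - c) ^ 2 = b ^ 2 / 4 - c := sq_sqrt hdisc
  unfold largerRoot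
  linear_combination hsq

theorem largerRoot_sq_sub_mul_add (hdisc : 0 ≤ b ^ 2 / 4 - c) :
    largerRoot b c ^ 2 - b * largerRoot b c + c = 0 := by
  rw [sq_sub_mul_add_eq_mul_largerRoot hdisc, sub_self, zero_mul]

theorem abs_half_lt_sqrt_of_neg (hc : c < 0) : |b / 2| < √(b ^ 2 / 4 - c) := by
  rw [lt_sqrt (abs_nonneg _), sq_abs]
  linarith

theorem largerRoot_pos (hc : c < 0) : 0 < largerRoot b c := by
  have := abs_half_lt_sqrt_of_neg (b := b) hc
  unfold largerRoot
  linarith [neg_abs_le (b / 2)]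

theorem sub_largerRoot_neg (hc : c < 0) : b - largerRoot b c < 0 := by
  have := abs_half_lt_sqrt_of_neg (b := b) hc
  unfold largerRoot
  linarith [le_abs_self (b / 2)]

theorem eq_largerRoot_of_pos {x : ℝ} (hc : c < 0) (hx : 0 < x) (hroot : x ^ 2 - b * x + c = 0) :
    x = largerRoot b c := by
  rw [sq_sub_mul_add_eq_mul_largerRoot (by linarith [sq_nonneg b]) x] at hroot
  have hother : 0 < x - (b - largerRoot b c) := by linarith [sub_largerRoot_neg (b := b) hc]
  exact sub_eq_zero.mp ((mul_eq_zero.mp hroot).resolve_right hother.ne')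

theorem lt_largerRoot_of_neg {x : ℝ} (hdisc : 0 ≤ b ^ 2 / 4 - c) (hx : x ^ 2 - b * x + c < 0) :
    x < largerRoot b c := by
  by_contra! hle
  have hroots : b - largerRoot b c ≤ largerRoot b c := by
    unfold largerRoot
    linarith [sqrt_nonneg (b ^ 2 / 4 - c)]
  rw [sq_sub_mul_add_eq_mul_largerRoot hdisc] at hx
  exact hx.not_ge (mul_nonneg (by linarith) (by linarith))

end LargerRoot

section Relaxation

variable {C₁ C₂ π₂ m₁ m₂ : ℝ}

theorem mass_sq_sub_mul_add (hC₁ : C₁ ≠ 0) :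
    m₁ ^ 2 - (-π₂ + m₁ * C₁ + m₂ * C₂) / C₁ * m₁ + -(π₂ / C₁) * m₁ = -(m₁ * m₂ * C₂ / C₁) := by
  field_simp
  ring

theorem pressure_eq_of_root {r : ℝ} (hC₁ : C₁ ≠ 0) (hr : r ≠ 0) (hrm : r ≠ m₁)
    (hroot : r ^ 2 - (-π₂ + m₁ * C₁ + m₂ * C₂) / C₁ * r + -(π₂ / C₁) * m₁ = 0) :
    C₁ * r = C₂ * (m₂ / (1 - m₁ / r)) - π₂ := by
  have hrm' : r - m₁ ≠ 0 := sub_ne_zero.mpr hrm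
  rw [one_sub_div hr, div_div_eq_mul_div, eq_sub_iff_add_eq, eq_comm,
    mul_div_assoc', div_eq_iff hrm']
  field_simp at hroot
  linear_combination -hroot

end Relaxation

theorem two_component_pressure_relaxation_equilibrium_general
    (C₁ C₂ π₂ : ℝ) (hC₁ : 0 < C₁) (hC₂ : 0 < C₂) (hπ₂ : 0 < π₂)
    (α₁₀ α₂₀ ρ₁₀ ρ₂₀ : ℝ) (hα₁₀ : α₁₀ ∈ Set.Ioo (0 : ℝ) 1)
    (hα₂₀ : α₂₀ ∈ Set.Ioo (0 : ℝ) 1)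
    (hρ₁₀ : 0 < ρ₁₀) (hρ₂₀ : 0 < ρ₂₀)
    (X₁ X₂ rho1Inf alpha1Inf alpha2Inf rho2Inf : ℝ)
    (hX₁ : X₁ = (-π₂ + α₁₀ * ρ₁₀ * C₁ + α₂₀ * ρ₂₀ * C₂) / C₁)
    (hX₂ : X₂ = -(π₂ / C₁) * (α₁₀ * ρ₁₀))
    (hrho1 : rho1Inf = X₁ / 2 + Real.sqrt (X₁ ^ 2 / 4 - X₂))
    (halpha1 : alpha1Inf = α₁₀ * ρ₁₀ / rho1Inf)
    (halpha2 : alpha2Inf = 1 - alpha1Inf)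
    (hrho2 : rho2Inf = α₂₀ * ρ₂₀ / alpha2Inf) :
    (0 < X₁ ^ 2 / 4 - X₂) ∧
    (rho1Inf ^ 2 - X₁ * rho1Inf + X₂ = 0) ∧
    (0 < rho1Inf) ∧
    (∀ ρ : ℝ, 0 < ρ → ρ ^ 2 - X₁ * ρ + X₂ = 0 → ρ = rho1Inf) ∧
    (0 < rho2Inf) ∧
    (alpha1Inf ∈ Set.Ioo (0 : ℝ) 1) ∧
    (alpha2Inf ∈ Set.Ioo (0 : ℝ) 1) ∧
    (alpha1Inf * rho1Inf = α₁₀ * ρ₁₀) ∧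
    (alpha2Inf * rho2Inf = α₂₀ * ρ₂₀) ∧
    (C₁ * rho1Inf = C₂ * rho2Inf - π₂) ∧
    (-π₂ < C₁ * rho1Inf) := by
  have hm₁ : 0 < α₁₀ * ρ₁₀ := mul_pos hα₁₀.1 hρ₁₀
  have hm₂ : 0 < α₂₀ * ρ₂₀ := mul_pos hα₂₀.1 hρ₂₀
  have hX₂neg : X₂ < 0 := hX₂ ▸ mul_neg_of_neg_of_pos (neg_neg_of_pos (div_pos hπ₂ hC₁)) hm₁
  have hdisc : 0 < X₁ ^ 2 / 4 - X₂ := by linarith [sq_nonneg X₁]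
  change rho1Inf = largerRoot X₁ X₂ at hrho1
  have hroot := largerRoot_sq_sub_mul_add hdisc.le
  have hpos := largerRoot_pos (b := X₁) hX₂neg
  have hm₁lt : α₁₀ * ρ₁₀ < rho1Inf := hrho1 ▸ lt_largerRoot_of_neg hdisc.le <| by
    rw [hX₁, hX₂, mass_sq_sub_mul_add hC₁.ne']
    exact neg_neg_of_pos (by positivity)
  subst hrho1
  have hα₁ : alpha1Inf ∈ Set.Ioo (0 : ℝ) 1 := halpha1 ▸ ⟨div_pos hm₁ hpos, (div_lt_one hpos).mpr hm₁lt⟩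
  have hα₂ : alpha2Inf ∈ Set.Ioo (0 : ℝ) 1 := halpha2 ▸ ⟨by linarith [hα₁.2], by linarith [hα₁.1]⟩
  refine ⟨hdisc, hroot, hpos, fun ρ hρ h ↦ eq_largerRoot_of_pos hX₂neg hρ h,
    hrho2 ▸ div_pos hm₂ hα₂.1, hα₁, hα₂, by rw [halpha1, div_mul_cancel₀ _ hpos.ne'],
    by rw [hrho2, mul_div_cancel₀ _ hα₂.1.ne'], ?_, by linarith [mul_pos hC₁ hpos]⟩
  rw [hrho2, halpha2, halpha1]
  subst hX₁ hX₂
  exact pressure_eq_of_root hC₁.ne' hpos.ne' hm₁lt.ne' hroot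

/-- Pressure-relaxation equilibrium for a two-component mixture: ideal gas
(`p₁ = C₁ρ₁`) and stiffened gas (`p₂ = C₂ρ₂ − π₂`, `π₂ > 0`). The discriminant
`X₁²/4 − X₂` is positive, `ρ₁^∞ = X₁/2 + √(X₁²/4 − X₂)` is the unique positive root of
`ρ² − X₁ρ + X₂ = 0`, and the resulting state conserves the phasic masses, satisfies
`ρ₁^∞, ρ₂^∞ > 0`, `α₁^∞, α₂^∞ ∈ (0,1)`, and pressure equilibrium
`C₁ρ₁^∞ = C₂ρ₂^∞ − π₂` with `p^∞ = C₁ρ₁^∞ > −π₂`. -/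
theorem two_component_pressure_relaxation_equilibrium
    (C₁ C₂ π₂ : ℝ) (hC₁ : 0 < C₁) (hC₂ : 0 < C₂) (hπ₂ : 0 < π₂)
    (α₁₀ α₂₀ ρ₁₀ ρ₂₀ : ℝ) (hα₁₀ : α₁₀ ∈ Set.Ioo (0 : ℝ) 1)
    (hα₂₀ : α₂₀ ∈ Set.Ioo (0 : ℝ) 1) (hsat₀ : α₁₀ + α₂₀ = 1)
    (hρ₁₀ : 0 < ρ₁₀) (hρ₂₀ : 0 < ρ₂₀)
    (X₁ X₂ rho1Inf alpha1Inf alpha2Inf rho2Inf : ℝ)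
    (hX₁ : X₁ = (-π₂ + α₁₀ * ρ₁₀ * C₁ + α₂₀ * ρ₂₀ * C₂) / C₁)
    (hX₂ : X₂ = -(π₂ / C₁) * (α₁₀ * ρ₁₀))
    (hrho1 : rho1Inf = X₁ / 2 + Real.sqrt (X₁ ^ 2 / 4 - X₂))
    (halpha1 : alpha1Inf = α₁₀ * ρ₁₀ / rho1Inf)
    (halpha2 : alpha2Inf = 1 - alpha1Inf)
    (hrho2 : rho2Inf = α₂₀ * ρ₂₀ / alpha2Inf) :
    (0 < X₁ ^ 2 / 4 - X₂) ∧
    (rho1Inf ^ 2 - X₁ * rho1Inf + X₂ = 0) ∧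
    (0 < rho1Inf) ∧
    (∀ ρ : ℝ, 0 < ρ → ρ ^ 2 - X₁ * ρ + X₂ = 0 → ρ = rho1Inf) ∧
    (0 < rho2Inf) ∧
    (alpha1Inf ∈ Set.Ioo (0 : ℝ) 1) ∧
    (alpha2Inf ∈ Set.Ioo (0 : ℝ) 1) ∧
    (alpha1Inf * rho1Inf = α₁₀ * ρ₁₀) ∧
    (alpha2Inf * rho2Inf = α₂₀ * ρ₂₀) ∧
    (C₁ * rho1Inf = C₂ * rho2Inf - π₂) ∧
    (-π₂ < C₁ * rho1Inf) :=
  two_component_pressure_relaxation_equilibrium_general C₁ C₂ π₂ hC₁ hC₂ hπ₂ α₁₀ α₂₀ ρ₁₀ ρ₂₀ hα₁₀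
    hα₂₀ hρ₁₀ hρ₂₀ X₁ X₂ rho1Inf alpha1Inf alpha2Inf rho2Inf hX₁ hX₂ hrho1 halpha1 halpha2 hrho2
end

section
/- Let K ≥ 2, let A_1,…,A_K > 0, let γ_1,…,γ_K > 1, let m_1,…,m_K > 0, and let π_1,…,π_K ∈ ℝ with π_k ≥ π_1 for all k. Define F : [0,1] → ℝ by F(α) := α + Σ_{k=2}^K [ A_k·m_k^{γ_k}·α^{γ_1} / ( A_1·m_1^{γ_1} + (π_k − π_1)·α^{γ_1} ) ]^{1/γ_k} − 1. Then F is continuous and strictly increasing on [0,1], F(0) = −1 < 0 and F(1) > 0; consequently there exists a unique α_1^∞ ∈ (0,1) with F(α_1^∞) = 0. -/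
/-!
Each summand of `F` is `x ↦ (c x^q / (d + e x^q))^r` with `c, d > 0`, `e ≥ 0` (this is where
`π_1 = min_k π_k` enters) and `q, r > 0`: it is continuous on `[0, ∞)`, vanishes at `0`, is
positive at `1`, and is monotone because `y ↦ c y / (d + e y)` is. Adding the strictly increasing
`α` makes `F` strictly increasing, and the intermediate value theorem on `F(0) = -1 < 0 < F(1)`
gives the root, unique by strict monotonicity.
-/

open Finset Set

theorem monotoneOn_mul_div_add {c d e : ℝ} (hc : 0 ≤ c) (hd : 0 < d) (he : 0 ≤ e) :
    MonotoneOn (fun y => c * y / (d + e * y)) (Ici 0) := by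
  intro x (hx : 0 ≤ x) y (hy : 0 ≤ y) hxy
  rw [div_le_div_iff₀ (by positivity) (by positivity)]
  nlinarith [mul_le_mul_of_nonneg_left hxy (mul_nonneg hc hd.le)]

/-- The equilibrium volume fraction `α_k^∞` of a component `k ≥ 2` as a function of `x = α_1^∞`. -/
noncomputable def equilibriumFraction (c d e q r x : ℝ) : ℝ :=
  (c * x ^ q / (d + e * x ^ q)) ^ r

section equilibriumFraction

variable {c d e q r : ℝ}

theorem equilibriumFraction_zero (hq : q ≠ 0) (hr : r ≠ 0) :
    equilibriumFraction c d e q r 0 = 0 := by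
  simp [equilibriumFraction, Real.zero_rpow hq, Real.zero_rpow hr]

theorem equilibriumFraction_one_pos (hc : 0 < c) (hd : 0 < d) (he : 0 ≤ e) :
    0 < equilibriumFraction c d e q r 1 := by
  unfold equilibriumFraction
  rw [Real.one_rpow, mul_one, mul_one]
  positivity

theorem continuousOn_equilibriumFraction (hd : 0 < d) (he : 0 ≤ e) (hq : 0 ≤ q) (hr : 0 ≤ r) :
    ContinuousOn (equilibriumFraction c d e q r) (Ici 0) := by
  have hpow : ContinuousOn (fun x : ℝ => x ^ q) (Ici 0) :=
    continuousOn_id.rpow_const fun _ _ => Or.inr hq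
  refine ((continuousOn_const.mul hpow).div (continuousOn_const.add (continuousOn_const.mul hpow))
    fun x (hx : 0 ≤ x) => ?_).rpow_const fun _ _ => Or.inr hr
  show d + e * x ^ q ≠ 0
  positivity

theorem monotoneOn_equilibriumFraction (hc : 0 ≤ c) (hd : 0 < d) (he : 0 ≤ e) (hq : 0 ≤ q)
    (hr : 0 ≤ r) : MonotoneOn (equilibriumFraction c d e q r) (Ici 0) := by
  have hpow := Real.monotoneOn_rpow_Ici_of_exponent_nonneg hq
  have hfrac := (monotoneOn_mul_div_add hc hd he).comp hpow
    fun x (hx : 0 ≤ x) => (Real.rpow_nonneg hx q : 0 ≤ x ^ q)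
  refine (Real.monotoneOn_rpow_Ici_of_exponent_nonneg hr).comp hfrac fun x (hx : 0 ≤ x) => ?_
  show 0 ≤ c * x ^ q / (d + e * x ^ q)
  positivity

end equilibriumFraction

theorem strictMonoOn_add_sum_sub {ι : Type*} {s : Finset ι} {g : ι → ℝ → ℝ} {S : Set ℝ}
    (hg : ∀ i ∈ s, MonotoneOn (g i) S) (b : ℝ) :
    StrictMonoOn (fun x => x + ∑ i ∈ s, g i x - b) S := by
  intro x hx y hy hxy
  have hsum : ∑ i ∈ s, g i x ≤ ∑ i ∈ s, g i y :=
    sum_le_sum fun i hi => hg i hi hx hy hxy.le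
  dsimp only
  linarith

theorem existsUnique_mem_Ioo_eq_zero {f : ℝ → ℝ} {a b : ℝ} (hab : a ≤ b)
    (hcont : ContinuousOn f (Icc a b)) (hmono : StrictMonoOn f (Icc a b))
    (ha : f a < 0) (hb : 0 < f b) : ∃! x, x ∈ Ioo a b ∧ f x = 0 := by
  obtain ⟨x, hx, hfx⟩ := intermediate_value_Ioo hab hcont ⟨ha, hb⟩
  refine ⟨x, ⟨hx, hfx⟩, fun y ⟨hy, hfy⟩ => ?_⟩
  exact hmono.injOn (Ioo_subset_Icc_self hy) (Ioo_subset_Icc_self hx) (hfy.trans hfx.symm)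

/-- Pressure-relaxation equilibrium for `K ≥ 2` isentropic stiffened gases
(`p_k + π_k = A_k ρ_k^{γ_k}`, components numbered so that `π_1 = min_k π_k`, conserved
phasic masses `m_k > 0`): the function
`F(α) = α + Σ_{k≥2} (A_k m_k^{γ_k} α^{γ_1} / (A_1 m_1^{γ_1} + (π_k − π_1)α^{γ_1}))^{1/γ_k} − 1`
is continuous and strictly increasing on `[0,1]` with `F(0) = −1 < 0` and `F(1) > 0`;
hence it has a unique root `α_1^∞ ∈ (0,1)`. -/
theorem isentropic_pressure_relaxation_unique_root (K : ℕ) [NeZero K] (hK : 2 ≤ K)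
    (A γ m piC : Fin K → ℝ) (hA : ∀ k, 0 < A k) (hγ : ∀ k, 1 < γ k)
    (hm : ∀ k, 0 < m k) (hpi : ∀ k, piC 0 ≤ piC k)
    (F : ℝ → ℝ)
    (hF : ∀ α : ℝ, F α = α + (∑ k ∈ univ.erase (0 : Fin K),
        (A k * m k ^ (γ k) * α ^ (γ 0)
          / (A 0 * m 0 ^ (γ 0) + (piC k - piC 0) * α ^ (γ 0))) ^ (1 / γ k)) - 1) :
    ContinuousOn F (Set.Icc 0 1) ∧
    StrictMonoOn F (Set.Icc 0 1) ∧
    F 0 = -1 ∧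
    0 < F 1 ∧
    ∃! α : ℝ, α ∈ Set.Ioo (0 : ℝ) 1 ∧ F α = 0 := by
  let G : ℝ → ℝ := fun α => α + ∑ k ∈ univ.erase 0, equilibriumFraction (A k * m k ^ γ k)
    (A 0 * m 0 ^ γ 0) (piC k - piC 0) (γ 0) (1 / γ k) α - 1
  obtain rfl : F = G := funext hF
  have hc k : 0 < A k * m k ^ γ k := mul_pos (hA k) (Real.rpow_pos_of_pos (hm k) _)
  have he k : 0 ≤ piC k - piC 0 := sub_nonneg.2 (hpi k)
  have hγ₀ : 0 < γ 0 := one_pos.trans (hγ 0)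
  have hr k : 0 < 1 / γ k := one_div_pos.2 (one_pos.trans (hγ k))
  have hcont : ContinuousOn G (Icc 0 1) :=
    (continuousOn_id.add (continuousOn_finsetSum _ fun k _ =>
      (continuousOn_equilibriumFraction (hc 0) (he k) hγ₀.le (hr k).le).mono
        Icc_subset_Ici_self)).sub continuousOn_const
  have hmono : StrictMonoOn G (Icc 0 1) := strictMonoOn_add_sum_sub (fun k _ =>
    (monotoneOn_equilibriumFraction (hc k).le (hc 0) (he k) hγ₀.le (hr k).le).mono
      Icc_subset_Ici_self) 1
  have hG0 : G 0 = -1 := by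
    simp only [G, equilibriumFraction_zero hγ₀.ne' (hr _).ne', sum_const_zero]
    norm_num
  have hG1 : 0 < G 1 := by
    have hone : (⟨1, hK⟩ : Fin K) ∈ univ.erase 0 :=
      mem_erase.2 ⟨Fin.ne_of_val_ne (show 1 ≠ (0 : Fin K).val from one_ne_zero), mem_univ _⟩
    have hsum := sum_pos (fun k _ => equilibriumFraction_one_pos (q := γ 0) (r := 1 / γ k)
      (hc k) (hc 0) (he k)) ⟨_, hone⟩
    show 0 < 1 + _ - 1
    linarith
  exact ⟨hcont, hmono, hG0, hG1,
    existsUnique_mem_Ioo_eq_zero zero_le_one hcont hmono (hG0 ▸ neg_one_lt_zero) hG1⟩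
end

section
/- Let d ≥ 1, let n ∈ ℝ^d with ‖n‖ = 1, let p₀ ∈ ℝ, let ρ₀ ≠ 0 and c₀ ≠ 0 be real numbers, and let F : ℝ → ℝ be differentiable at p₀ with F'(p₀) = 1/(ρ₀·c₀). Define Ψ_∓ : ℝ^d × ℝ → ℝ by Ψ_∓(v,p) := v·n ∓ F(p), and the acoustic eigenvectors r_± := ( ±(c₀/ρ₀)·n, c₀² ) ∈ ℝ^{d+1}. Then Ψ_∓ is (Fréchet) differentiable at every point (v, p₀), and its differential at (v,p₀) applied to r_± equals zero: DΨ_∓(v,p₀)[r_±] = 0. In other words, Ψ_∓ = v·n ∓ ∫ (c̄ρ)⁻¹ dp is a Riemann invariant of the acoustic characteristic field associated with the eigenvalue v·n ± c₀. -/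
open scoped RealInnerProductSpace

/-! `DΨ_∓(v,p₀)[(w, b)] = ⟪w, n⟫ ∓ F'(p₀) b`, so on `r_± = (±(c₀/ρ₀) n, c₀²)` with `‖n‖ = 1`
it equals `±c₀/ρ₀ ∓ c₀²/(ρ₀c₀) = 0`. -/

section

variable {E : Type*} [NormedAddCommGroup E] [InnerProductSpace ℝ E] {F : ℝ → ℝ} {F' p : ℝ}

theorem hasFDerivAt_inner_fst {G : Type*} [NormedAddCommGroup G] [NormedSpace ℝ G]
    (n : E) (x : E × G) :
    HasFDerivAt (fun q : E × G => ⟪q.1, n⟫) ((innerSL ℝ n).comp (.fst ℝ E G)) x := by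
  convert ((innerSL ℝ n).comp (.fst ℝ E G)).hasFDerivAt (x := x) using 1
  ext q
  exact real_inner_comm n q.1

theorem hasFDerivAt_comp_snd (hF : HasDerivAt F F' p) (v : E) :
    HasFDerivAt (fun q : E × ℝ => F q.2) (F' • .snd ℝ E ℝ) (v, p) :=
  hF.comp_hasFDerivAt (v, p) (hasFDerivAt_snd (𝕜 := ℝ))

theorem hasFDerivAt_inner_fst_sub_comp_snd (n : E) (hF : HasDerivAt F F' p) (v : E) :
    HasFDerivAt (fun q : E × ℝ => ⟪q.1, n⟫ - F q.2)
      ((innerSL ℝ n).comp (.fst ℝ E ℝ) - F' • .snd ℝ E ℝ) (v, p) :=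
  (hasFDerivAt_inner_fst n _).sub (hasFDerivAt_comp_snd hF v)

theorem hasFDerivAt_inner_fst_add_comp_snd (n : E) (hF : HasDerivAt F F' p) (v : E) :
    HasFDerivAt (fun q : E × ℝ => ⟪q.1, n⟫ + F q.2)
      ((innerSL ℝ n).comp (.fst ℝ E ℝ) + F' • .snd ℝ E ℝ) (v, p) :=
  (hasFDerivAt_inner_fst n _).add (hasFDerivAt_comp_snd hF v)

theorem fderiv_inner_fst_sub_comp_snd_apply (n : E) (hF : HasDerivAt F F' p) (v w : E) (b : ℝ) :
    fderiv ℝ (fun q : E × ℝ => ⟪q.1, n⟫ - F q.2) (v, p) (w, b) = ⟪w, n⟫ - F' * b := by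
  simp [(hasFDerivAt_inner_fst_sub_comp_snd n hF v).fderiv, real_inner_comm n w]

theorem fderiv_inner_fst_add_comp_snd_apply (n : E) (hF : HasDerivAt F F' p) (v w : E) (b : ℝ) :
    fderiv ℝ (fun q : E × ℝ => ⟪q.1, n⟫ + F q.2) (v, p) (w, b) = ⟪w, n⟫ + F' * b := by
  simp [(hasFDerivAt_inner_fst_add_comp_snd n hF v).fderiv, real_inner_comm n w]

theorem real_inner_smul_left_of_norm_eq_one {n : E} (hn : ‖n‖ = 1) (a : ℝ) : ⟪a • n, n⟫ = a := by
  rw [real_inner_smul_left, real_inner_self_eq_norm_sq, hn, one_pow, mul_one]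

end

theorem one_div_mul_mul_sq (ρ c : ℝ) : 1 / (ρ * c) * c ^ 2 = c / ρ := by
  rcases eq_or_ne c 0 with rfl | hc
  · simp
  · field_simp

theorem acoustic_riemann_invariants_general (d : ℕ)
    (n : EuclideanSpace ℝ (Fin d)) (hn : ‖n‖ = 1)
    (p₀ ρ₀ c₀ : ℝ)
    (F : ℝ → ℝ) (hF : HasDerivAt F (1 / (ρ₀ * c₀)) p₀) :
    ∀ v : EuclideanSpace ℝ (Fin d),
      (DifferentiableAt ℝ
          (fun q : EuclideanSpace ℝ (Fin d) × ℝ => ⟪q.1, n⟫ - F q.2) (v, p₀)) ∧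
      (fderiv ℝ (fun q : EuclideanSpace ℝ (Fin d) × ℝ => ⟪q.1, n⟫ - F q.2) (v, p₀)
          ((c₀ / ρ₀) • n, c₀ ^ 2) = 0) ∧
      (DifferentiableAt ℝ
          (fun q : EuclideanSpace ℝ (Fin d) × ℝ => ⟪q.1, n⟫ + F q.2) (v, p₀)) ∧
      (fderiv ℝ (fun q : EuclideanSpace ℝ (Fin d) × ℝ => ⟪q.1, n⟫ + F q.2) (v, p₀)
          (-(c₀ / ρ₀) • n, c₀ ^ 2) = 0) := by
  intro v
  refine ⟨(hasFDerivAt_inner_fst_sub_comp_snd n hF v).differentiableAt, ?_,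
    (hasFDerivAt_inner_fst_add_comp_snd n hF v).differentiableAt, ?_⟩
  · rw [fderiv_inner_fst_sub_comp_snd_apply n hF, real_inner_smul_left_of_norm_eq_one hn,
      one_div_mul_mul_sq, sub_self]
  · rw [fderiv_inner_fst_add_comp_snd_apply n hF, real_inner_smul_left_of_norm_eq_one hn,
      one_div_mul_mul_sq, neg_add_cancel]

/-- Riemann invariants of the acoustic fields: if `F'(p₀) = 1/(ρ₀c₀)`, then the
functions `Ψ_∓(v,p) = v·n ∓ F(p)` are differentiable at every `(v,p₀)` and their
differentials annihilate the acoustic eigenvectors `r_± = (±(c₀/ρ₀)n, c₀²)`. -/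
theorem acoustic_riemann_invariants (d : ℕ) (hd : 1 ≤ d)
    (n : EuclideanSpace ℝ (Fin d)) (hn : ‖n‖ = 1)
    (p₀ ρ₀ c₀ : ℝ) (hρ₀ : ρ₀ ≠ 0) (hc₀ : c₀ ≠ 0)
    (F : ℝ → ℝ) (hF : HasDerivAt F (1 / (ρ₀ * c₀)) p₀) :
    ∀ v : EuclideanSpace ℝ (Fin d),
      (DifferentiableAt ℝ
          (fun q : EuclideanSpace ℝ (Fin d) × ℝ => ⟪q.1, n⟫ - F q.2) (v, p₀)) ∧
      (fderiv ℝ (fun q : EuclideanSpace ℝ (Fin d) × ℝ => ⟪q.1, n⟫ - F q.2) (v, p₀)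
          ((c₀ / ρ₀) • n, c₀ ^ 2) = 0) ∧
      (DifferentiableAt ℝ
          (fun q : EuclideanSpace ℝ (Fin d) × ℝ => ⟪q.1, n⟫ + F q.2) (v, p₀)) ∧
      (fderiv ℝ (fun q : EuclideanSpace ℝ (Fin d) × ℝ => ⟪q.1, n⟫ + F q.2) (v, p₀)
          (-(c₀ / ρ₀) • n, c₀ ^ 2) = 0) :=
  acoustic_riemann_invariants_general d n hn p₀ ρ₀ c₀ F hF
end
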